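/- Subject head of the PT construction (β→∞ limit): Consider the subject head with weights W_KQ^subj = β(Σ_{j=1}^M E(s_j))E([sep])^T and W_OV^subj = -Σ_{j=1}^M (Σ_{u∈U, u∉A_j} E(u)) E(s_j)^T. For every PT sequence X with subject s_{j*}, as β→∞ the attention at the last position distributes uniformly over the subject positions (all of which carry the token s_{j*}), so that lim_{β→∞} g_subj(X) = E(s_{j*}) and lim_{β→∞} W_OV^subj g_subj(X) = -(Σ_{u∈U} E(u) - Σ_{l=1}^L E(a_{j*}^l)), i.e., the head outputs the negative sum of all attribute tokens not associated with subject s_{j*}. -/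

import Mathlib

open Filter Topology Finset Matrix

namespace CR

/-- Vocabulary tokens: `M` subjects, `L` attribute types each with `U` values,
`G` grammar tokens, `L` relation tokens, and a separator. -/
inductive Tok (M L U G : ℕ) : Type where
  | subj : Fin M → Tok M L U G
  | attr : Fin L → Fin U → Tok M L U G
  | gram : Fin G → Tok M L U G
  | rel  : Fin L → Tok M L U G
  | sep  : Tok M L U G
deriving DecidableEq, Fintype

/-- Embedding dimension: one coordinate per vocabulary token plus `P` positional coordinates. -/
abbrev Dim (M L U G P : ℕ) := Tok M L U G ⊕ Fin P

abbrev Vec (M L U G P : ℕ) := Dim M L U G P → ℝ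

variable {M L U G P : ℕ}

/-- One-hot token embedding `E(v)`. -/
def E (v : Tok M L U G) : Vec M L U G P :=
  fun i => if i = Sum.inl v then 1 else 0

/-- One-hot positional encoding for relative position `-k`
(`pos 0 = E(p₀)`, `pos 1 = E(p₋₁)`, ...); zero if `k ≥ P`. -/
def pos (k : ℕ) : Vec M L U G P :=
  fun i => match i with
  | Sum.inl _ => 0
  | Sum.inr j => if (j : ℕ) = k then 1 else 0

/-- Softmax attention weight of (0-indexed) row `j` among rows `0,…,t-1`, with query row `t-1`;
row `i` carries the relative positional encoding `p_{-(t-1-i)}`. -/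
noncomputable def attn (W : Matrix (Dim M L U G P) (Dim M L U G P) ℝ)
    (X : ℕ → Vec M L U G P) (t j : ℕ) : ℝ :=
  Real.exp ((X j + pos (t - 1 - j)) ⬝ᵥ W.mulVec (X (t - 1))) /
    ∑ i ∈ Finset.range t, Real.exp ((X i + pos (t - 1 - i)) ⬝ᵥ W.mulVec (X (t - 1)))

/-- Attention-head output `g_h^t(X)` (attention over the first `t` rows, query at row `t-1`). -/
noncomputable def gHead (W : Matrix (Dim M L U G P) (Dim M L U G P) ℝ)
    (X : ℕ → Vec M L U G P) (t : ℕ) : Vec M L U G P :=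
  ∑ j ∈ Finset.range t, attn W X t j • X j

/-- Token at (0-indexed) position `t` of a PT sequence with subject `jstar`:
block `k` occupies positions `k(S+3),…,k(S+3)+S+1` (subject, `S` middle tokens, separator),
followed (except after the last block) by the attribute `a_{jstar}^{ltype k}`. -/
def ptTok (S : ℕ) (jstar : Fin M) (ltype : ℕ → Fin L)
    (mid : ℕ → ℕ → Tok M L U G) (a : Fin M → Fin L → Fin U) (t : ℕ) : Tok M L U G :=
  let k := t / (S + 3)
  let r := t % (S + 3)
  if r = 0 then Tok.subj jstar
  else if r ≤ S then mid k (r - 1)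
  else if r = S + 1 then Tok.sep
  else Tok.attr (ltype k) (a jstar (ltype k))

/-- Token at (0-indexed) position `t` of an ICL sequence with shared attribute type `lstar`
and subjects `js 0, js 1, …`: the pattern is subject, separator, attribute, subject, … -/
def iclTok (a : Fin M → Fin L → Fin U) (js : ℕ → Fin M) (lstar : Fin L) (t : ℕ) :
    Tok M L U G :=
  if t % 3 = 0 then Tok.subj (js (t / 3))
  else if t % 3 = 1 then Tok.sep
  else Tok.attr lstar (a (js (t / 3)) lstar)

/-! Queried from the final `[sep]`, the rank-one key-query matrix scores `β` at every subject
position and `0` elsewhere, positional encodings being orthogonal to token embeddings. Written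
as functions of `exp (-β) → 0`, the softmax weights therefore tend to the uniform distribution on
the subject positions, all of which carry `s_{j*}`; the linear output-value map sends `E(s_{j*})`
to minus the sum of the attributes not owned by `s_{j*}`. -/

theorem tendsto_softmax_indicator {ι F : Type*} [NormedAddCommGroup F] [NormedSpace ℝ F]
    (s : Finset ι) (p : ι → Prop) [DecidablePred p] (hp : (s.filter p).Nonempty) (x : ι → F) :
    Tendsto (fun β : ℝ => ∑ j ∈ s,
        (Real.exp (if p j then β else 0) / ∑ i ∈ s, Real.exp (if p i then β else 0)) • x j)
      atTop (𝓝 ((#(s.filter p) : ℝ)⁻¹ • ∑ j ∈ s with p j, x j)) := by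
  -- Dividing numerator and denominator by `exp β` turns the weights into continuous functions
  -- of `exp (-β) → 0`.
  set w : ℝ → ι → ℝ := fun t j => if p j then 1 else t
  have hw : ∀ β : ℝ, ∀ j, Real.exp (if p j then β else 0) = Real.exp β * w (Real.exp (-β)) j := by
    intro β j
    by_cases h : p j <;> simp [w, h, ← Real.exp_add]
  have hden : ∑ i ∈ s, w 0 i = #(s.filter p) := by simp [w, Finset.sum_boole]
  have hlim : Tendsto (fun t => ∑ j ∈ s, (w t j / ∑ i ∈ s, w t i) • x j) (𝓝 0)
      (𝓝 (∑ j ∈ s, (w 0 j / ∑ i ∈ s, w 0 i) • x j)) := by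
    have hcont : ∀ j, Continuous fun t => w t j := fun j => by
      by_cases h : p j <;> simp [w, h, continuous_id', continuous_const]
    refine tendsto_finsetSum _ fun j _ => ((hcont j).tendsto 0).div ?_ ?_ |>.smul_const _
    · exact (continuous_finsetSum _ fun i _ => hcont i).tendsto 0
    · rw [hden]; exact_mod_cast hp.card_pos.ne'
  have hval : ∑ j ∈ s, (w 0 j / ∑ i ∈ s, w 0 i) • x j
      = (#(s.filter p) : ℝ)⁻¹ • ∑ j ∈ s with p j, x j := by
    rw [hden, Finset.sum_filter, Finset.smul_sum]
    refine Finset.sum_congr rfl fun j _ => ?_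
    by_cases h : p j <;> simp [w, h, div_eq_inv_mul]
  rw [← hval]
  refine (hlim.comp Real.tendsto_exp_neg_atTop_nhds_zero).congr fun β => ?_
  simp only [Function.comp_apply, hw, ← Finset.mul_sum]
  exact Finset.sum_congr rfl fun j _ => by rw [mul_div_mul_left _ _ (Real.exp_pos β).ne']

def Tok.isSubj : Tok M L U G → Bool
  | .subj _ => true
  | _ => false

theorem E_dotProduct_E (v w : Tok M L U G) :
    (E v : Vec M L U G P) ⬝ᵥ E w = if v = w then 1 else 0 := by
  simp [dotProduct, E, eq_comm]

theorem pos_dotProduct_E (k : ℕ) (v : Tok M L U G) : (pos k : Vec M L U G P) ⬝ᵥ E v = 0 := by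
  simp [dotProduct, pos, E]

theorem E_add_pos_dotProduct_sum_E_subj (v : Tok M L U G) (k : ℕ) :
    (E v + pos k : Vec M L U G P) ⬝ᵥ ∑ j : Fin M, E (Tok.subj j) = if v.isSubj then 1 else 0 := by
  simp only [add_dotProduct, dotProduct_sum, E_dotProduct_E, pos_dotProduct_E, add_zero]
  cases v <;> simp [Tok.isSubj]

/-- The key-query matrix `W_KQ^subj` of the subject head at `β = 1`. -/
def subjectKQ : Matrix (Dim M L U G P) (Dim M L U G P) ℝ :=
  vecMulVec (∑ j : Fin M, E (Tok.subj j)) (E Tok.sep)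

def subjectOV (a : Fin M → Fin L → Fin U) : Matrix (Dim M L U G P) (Dim M L U G P) ℝ :=
  -(∑ j : Fin M, vecMulVec (∑ l : Fin L, ∑ u ∈ Finset.univ.erase (a j l), E (Tok.attr l u))
      (E (Tok.subj j)))

theorem E_add_pos_dotProduct_smul_subjectKQ_mulVec_E_sep (β : ℝ) (v : Tok M L U G) (k : ℕ) :
    (E v + pos k : Vec M L U G P) ⬝ᵥ (β • subjectKQ) *ᵥ E Tok.sep =
      if v.isSubj then β else 0 := by
  rw [subjectKQ, smul_mulVec, vecMulVec_mulVec, E_dotProduct_E, if_pos rfl, dotProduct_smul,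
    MulOpposite.op_one, one_smul, E_add_pos_dotProduct_sum_E_subj]
  split_ifs <;> simp

theorem subjectOV_mulVec_E_subj (a : Fin M → Fin L → Fin U) (j : Fin M) :
    subjectOV a *ᵥ (E (Tok.subj j) : Vec M L U G P) =
      -((∑ l : Fin L, ∑ u : Fin U, E (Tok.attr l u)) - ∑ l : Fin L, E (Tok.attr l (a j l))) := by
  simp only [subjectOV, neg_mulVec, sum_mulVec, vecMulVec_mulVec, E_dotProduct_E, Tok.subj.injEq]
  simp [← Finset.sum_sub_distrib, Finset.sum_erase_eq_sub]

section PT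

variable (S : ℕ) (jstar : Fin M) (ltype : ℕ → Fin L) (mid : ℕ → ℕ → Tok M L U G)
  (a : Fin M → Fin L → Fin U)

theorem ptTok_zero : ptTok S jstar ltype mid a 0 = Tok.subj jstar := by
  simp [ptTok]

theorem ptTok_last (N : ℕ) (hN : 0 < N) :
    ptTok S jstar ltype mid a (N * (S + 3) - 2) = Tok.sep := by
  obtain ⟨n, rfl⟩ : ∃ n, N = n + 1 := ⟨N - 1, by omega⟩
  have h : (n + 1) * (S + 3) - 2 = S + 1 + (S + 3) * n := by rw [add_mul]; lia
  simp [ptTok, h, Nat.add_mul_mod_self_left, Nat.mod_eq_of_lt (show S + 1 < S + 3 by omega)]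

theorem ptTok_eq_subj_of_isSubj (N : ℕ)
    (hmid : ∀ k < N, ∀ i < S, (mid k i).isSubj = false) {t : ℕ} (ht : t < N * (S + 3))
    (hsubj : (ptTok S jstar ltype mid a t).isSubj) :
    ptTok S jstar ltype mid a t = Tok.subj jstar := by
  have hk : t / (S + 3) < N := Nat.div_lt_of_lt_mul (by rwa [mul_comm])
  dsimp only [ptTok] at hsubj ⊢
  split_ifs at hsubj ⊢ with h0 hS
  · rfl
  · simp [hmid _ hk (t % (S + 3) - 1) (by omega)] at hsubj
  all_goals simp [Tok.isSubj] at hsubj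

theorem tendsto_gHead_smul_subjectKQ_ptTok (N : ℕ) (hN : 0 < N)
    (hmid : ∀ k < N, ∀ i < S, (mid k i).isSubj = false) :
    Tendsto (fun β : ℝ => gHead (β • subjectKQ) (fun t => E (ptTok S jstar ltype mid a t) :
        ℕ → Vec M L U G P) (N * (S + 3) - 1)) atTop (𝓝 (E (Tok.subj jstar))) := by
  set T := N * (S + 3) - 1
  set X : ℕ → Vec M L U G P := fun t => E (ptTok S jstar ltype mid a t)
  set p : ℕ → Prop := fun t => (ptTok S jstar ltype mid a t).isSubj
  have hT_pos : 0 < T := by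
    have : 3 ≤ N * (S + 3) := le_mul_of_one_le_of_le hN (by omega)
    omega
  have hlast : X (T - 1) = E Tok.sep := by
    simp only [X, show T - 1 = N * (S + 3) - 2 by omega, ptTok_last S jstar ltype mid a N hN]
  have hhead : ∀ β : ℝ, gHead (β • subjectKQ) X T = ∑ j ∈ range T,
      (Real.exp (if p j then β else 0) / ∑ i ∈ range T, Real.exp (if p i then β else 0)) • X j :=
    fun β => by
      simp only [gHead, attn, hlast]
      simp only [X, E_add_pos_dotProduct_smul_subjectKQ_mulVec_E_sep, p]
  have hnonempty : ((range T).filter p).Nonempty :=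
    ⟨0, mem_filter.mpr ⟨mem_range.mpr hT_pos, by simp [p, ptTok_zero, Tok.isSubj]⟩⟩
  have hsubj : ∀ j ∈ (range T).filter p, X j = E (Tok.subj jstar) := fun j hj => by
    rw [mem_filter, mem_range] at hj
    simp only [X, ptTok_eq_subj_of_isSubj S jstar ltype mid a N hmid (by omega) hj.2]
  have havg : (#((range T).filter p) : ℝ)⁻¹ • ∑ j ∈ range T with p j, X j = E (Tok.subj jstar) := by
    rw [sum_congr rfl hsubj, sum_const, ← Nat.cast_smul_eq_nsmul ℝ,
      inv_smul_smul₀ (by exact_mod_cast hnonempty.card_pos.ne')]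
  simpa only [hhead, havg] using tendsto_softmax_indicator (range T) p hnonempty X

end PT

theorem subject_head_PT_limit_general
    (M L U G P S N : ℕ) (hN : 0 < N)
    (a : Fin M → Fin L → Fin U) (jstar : Fin M) (ltype : ℕ → Fin L)
    (mid : ℕ → ℕ → Tok M L U G) (relIdx : ℕ → ℕ)
    (hmid : ∀ k < N, relIdx k < S ∧ mid k (relIdx k) = Tok.rel (ltype k) ∧
      ∀ i < S, i ≠ relIdx k → ∃ g : Fin G, mid k i = Tok.gram g)
    (X : ℕ → Vec M L U G P) (hX : ∀ t, X t = E (ptTok S jstar ltype mid a t))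
    (T : ℕ) (hT : T = N * (S + 3) - 1)
    (WKQ0 WOV : Matrix (Dim M L U G P) (Dim M L U G P) ℝ)
    (hKQ : WKQ0 = Matrix.vecMulVec (∑ j : Fin M, E (Tok.subj j)) (E Tok.sep))
    (hOV : WOV = -(∑ j : Fin M, Matrix.vecMulVec
      (∑ l : Fin L, ∑ u ∈ Finset.univ.erase (a j l), E (Tok.attr l u))
      (E (Tok.subj j)))) :
    Filter.Tendsto (fun β : ℝ => gHead (β • WKQ0) X T) Filter.atTop
      (𝓝 (E (Tok.subj jstar))) ∧
    Filter.Tendsto (fun β : ℝ => WOV.mulVec (gHead (β • WKQ0) X T)) Filter.atTop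
      (𝓝 (-((∑ l : Fin L, ∑ u : Fin U, E (Tok.attr l u))
            - ∑ l : Fin L, E (Tok.attr l (a jstar l))))) := by
  have hmid_not_subj : ∀ k < N, ∀ i < S, (mid k i).isSubj = false := fun k hk i hi => by
    obtain ⟨-, hrel, hgram⟩ := hmid k hk
    by_cases h : i = relIdx k
    · rw [h, hrel]; rfl
    · obtain ⟨g, hg⟩ := hgram i hi h
      rw [hg]; rfl
  obtain rfl : X = fun t => E (ptTok S jstar ltype mid a t) := funext hX
  subst hT hKQ hOV
  have hlim := tendsto_gHead_smul_subjectKQ_ptTok (P := P) S jstar ltype mid a N hN hmid_not_subj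
  refine ⟨hlim, ?_⟩
  rw [← subjectOV, ← subjectOV_mulVec_E_subj]
  exact ((subjectOV a).mulVecLin.continuous_of_finiteDimensional.tendsto _).comp hlim

/-- Subject head of the PT construction (β→∞ limit). -/
theorem subject_head_PT_limit
    (M L U G P S N : ℕ) (hN : 0 < N) (hP : N * (S + 3) - 1 ≤ P)
    (a : Fin M → Fin L → Fin U) (jstar : Fin M) (ltype : ℕ → Fin L)
    (mid : ℕ → ℕ → Tok M L U G) (relIdx : ℕ → ℕ)
    (hmid : ∀ k < N, relIdx k < S ∧ mid k (relIdx k) = Tok.rel (ltype k) ∧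
      ∀ i < S, i ≠ relIdx k → ∃ g : Fin G, mid k i = Tok.gram g)
    (X : ℕ → Vec M L U G P) (hX : ∀ t, X t = E (ptTok S jstar ltype mid a t))
    (T : ℕ) (hT : T = N * (S + 3) - 1)
    (WKQ0 WOV : Matrix (Dim M L U G P) (Dim M L U G P) ℝ)
    (hKQ : WKQ0 = Matrix.vecMulVec (∑ j : Fin M, E (Tok.subj j)) (E Tok.sep))
    (hOV : WOV = -(∑ j : Fin M, Matrix.vecMulVec
      (∑ l : Fin L, ∑ u ∈ Finset.univ.erase (a j l), E (Tok.attr l u))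
      (E (Tok.subj j)))) :
    Filter.Tendsto (fun β : ℝ => gHead (β • WKQ0) X T) Filter.atTop
      (𝓝 (E (Tok.subj jstar))) ∧
    Filter.Tendsto (fun β : ℝ => WOV.mulVec (gHead (β • WKQ0) X T)) Filter.atTop
      (𝓝 (-((∑ l : Fin L, ∑ u : Fin U, E (Tok.attr l u))
            - ∑ l : Fin L, E (Tok.attr l (a jstar l))))) :=
  subject_head_PT_limit_general M L U G P S N hN a jstar ltype mid relIdx hmid X hX T hT WKQ0 WOV
    hKQ hOV

end CR
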